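/- For every Tychonoff (completely regular Hausdorff) topological space Y, there exist a complete metric space (X,d) in which every point has an open neighbourhood homeomorphic to the real line ℝ, and a closed embedding of Y into the Wijsman hyperspace (2^X, T_{W(d)}). -/

import Mathlib

/-- The Wijsman hyperspace of a metric space `X`: the collection `2^X` of all
nonempty closed subsets of `X`. -/
def WijsmanHyperspace (X : Type*) [MetricSpace X] : Type _ :=
  {A : Set X // A.Nonempty ∧ IsClosed A}

/-- The Wijsman topology `T_{W(d)}`: the topology induced from the product topology
on `X → ℝ` by the injection `A ↦ (x ↦ d(x, A))`, i.e. the weakest topology making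
all distance functionals `A ↦ d(x, A)` continuous. -/
noncomputable instance wijsmanTopology (X : Type*) [MetricSpace X] :
    TopologicalSpace (WijsmanHyperspace X) :=
  TopologicalSpace.induced (fun A (x : X) => Metric.infDist x A.1) Pi.topologicalSpace

/-!
Let `X` be the space of real lines attached at the points of a `{1, 2}`-valued metric space
whose points are the continuous maps `w : Y → [0, 1]` and the families `N` of such maps with
pointwise infimum `0`, where `w` and `N` are at distance `1` exactly when `w ∈ N`. Send `y` to
the set `A y` that meets the line of `w` at height `w y` and every line of a family at height
`2`. Then `d((a, t), A y) = min |t - height a y| (|t| + gap a)` with `gap a` independent of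
`y`, so `y ↦ A y` is continuous, and `w y = d(origin of w, A y)` makes it an embedding. If
`A` converged to some `B` along an ultrafilter `U` converging to no point of `Y`, the maps
`v_y` with `v_y y = 0` and `v_y → 1` along `U` would form a family `N` with
`d(origin of N, A y) = 1` for all `y`, while every point of `B` is at distance at least `2`
from that origin.
-/

open Metric Set Filter Topology unitInterval

namespace WijsmanHyperspace

variable {X : Type*} [MetricSpace X]

theorem continuous_infDist (x : X) : Continuous fun B : WijsmanHyperspace X => infDist x B.1 :=
  (continuous_apply x).comp
    (continuous_induced_dom (f := fun (B : WijsmanHyperspace X) (x : X) => infDist x B.1))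

theorem continuous_iff {Z : Type*} [TopologicalSpace Z] {f : Z → WijsmanHyperspace X} :
    Continuous f ↔ ∀ x, Continuous fun z => infDist x (f z).1 :=
  continuous_induced_rng.trans continuous_pi_iff

theorem injective_infDist :
    Function.Injective fun (B : WijsmanHyperspace X) (x : X) => infDist x B.1 := by
  intro A B h
  refine Subtype.ext <| Set.ext fun x => ?_
  have hx : infDist x A.1 = infDist x B.1 := congrFun h x
  rw [A.2.2.mem_iff_infDist_zero A.2.1, B.2.2.mem_iff_infDist_zero B.2.1, hx]

instance : T2Space (WijsmanHyperspace X) :=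
  .of_injective_continuous injective_infDist continuous_induced_dom

end WijsmanHyperspace

@[ext]
structure LinesOver (ι : Type*) where
  idx : ι
  ht : ℝ

namespace LinesOver

variable {ι : Type*}

def graph (h : ι → ℝ) : Set (LinesOver ι) :=
  range fun a => mk a (h a)

theorem mk_mem_graph (h : ι → ℝ) (a : ι) : mk a (h a) ∈ graph h :=
  mem_range_self a

variable [MetricSpace ι]

open scoped Classical in
noncomputable instance : MetricSpace (LinesOver ι) where
  dist p q := if p.idx = q.idx then |p.ht - q.ht| else |p.ht| + dist p.idx q.idx + |q.ht|
  dist_self p := by simp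
  dist_comm p q := by
    by_cases h : p.idx = q.idx
    · simp [h, abs_sub_comm]
    · simp [h, Ne.symm h, dist_comm]; ring
  dist_triangle := by
    rintro ⟨a, s⟩ ⟨b, t⟩ ⟨c, u⟩
    have := dist_triangle a b c
    have := abs_sub_le s t u
    have := abs_sub s u
    have := abs_sub_abs_le_abs_sub s t
    have := abs_sub_abs_le_abs_sub u t
    have := abs_sub_comm t u
    have := dist_nonneg (x := a) (y := b)
    have := dist_nonneg (x := b) (y := c)
    have := abs_nonneg t
    dsimp only
    split_ifs <;> subst_vars <;> first | linarith | exact absurd rfl ‹_›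
  eq_of_dist_eq_zero {p q} h := by
    by_cases hpq : p.idx = q.idx
    · simp only [hpq, if_true, abs_eq_zero, sub_eq_zero] at h
      exact LinesOver.ext hpq h
    · simp only [hpq, if_false] at h
      linarith [abs_nonneg p.ht, abs_nonneg q.ht, dist_pos.2 hpq]

@[simp]
theorem dist_mk_mk_self (a : ι) (s t : ℝ) : dist (mk a s) (mk a t) = |s - t| :=
  if_pos rfl

theorem dist_mk_mk_of_ne {a b : ι} (h : a ≠ b) (s t : ℝ) :
    dist (mk a s) (mk b t) = |s| + dist a b + |t| :=
  if_neg h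

theorem isometry_mk (a : ι) : Isometry (mk a) :=
  Isometry.of_dist_eq fun s t => by rw [dist_mk_mk_self, Real.dist_eq]

theorem infDist_mk_graph {h : ι → ℝ} {a : ι} {k : ℝ}
    (hk : IsGLB ((fun b => dist a b + |h b|) '' {a}ᶜ) k) (t : ℝ) :
    infDist (mk a t) (graph h) = min |t - h a| (|t| + k) := by
  refine le_antisymm (le_min ?_ ?_) ((le_infDist ⟨_, mk_mem_graph h a⟩).2 ?_)
  · simpa using infDist_le_dist_of_mem (x := mk a t) (mk_mem_graph h a)
  · refine le_of_forall_pos_lt_add fun ε hε => ?_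
    obtain ⟨_, ⟨b, hb, rfl⟩, -, hlt⟩ := hk.exists_between_self_add hε
    calc infDist (mk a t) (graph h) ≤ dist (mk a t) (mk b (h b)) :=
          infDist_le_dist_of_mem (mk_mem_graph h b)
      _ = |t| + (dist a b + |h b|) := by rw [dist_mk_mk_of_ne (Ne.symm hb)]; ring
      _ < |t| + k + ε := by linarith
  · rintro _ ⟨b, rfl⟩
    rcases eq_or_ne a b with rfl | hab
    · simp
    · rw [dist_mk_mk_of_ne hab]
      linarith [min_le_right |t - h a| (|t| + k), hk.1 ⟨b, hab.symm, rfl⟩]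

section UniformlyDiscrete

variable (hι : Pairwise fun a b : ι => 1 ≤ dist a b)
include hι

theorem one_le_dist_of_idx_ne {p q : LinesOver ι} (h : p.idx ≠ q.idx) : 1 ≤ dist p q := by
  rw [show dist p q = |p.ht| + dist p.idx q.idx + |q.ht| from dist_mk_mk_of_ne h _ _]
  linarith [hι h, abs_nonneg p.ht, abs_nonneg q.ht]

theorem ball_one_subset_range_mk (p : LinesOver ι) : ball p 1 ⊆ range (mk p.idx) := by
  intro q hq
  have : q.idx = p.idx := by
    by_contra hne
    exact (one_le_dist_of_idx_ne hι hne).not_gt hq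
  exact ⟨q.ht, by rw [← this]⟩

theorem isOpen_range_mk (a : ι) : IsOpen (range (mk a)) := by
  refine isOpen_iff.2 ?_
  rintro _ ⟨t, rfl⟩
  exact ⟨1, one_pos, ball_one_subset_range_mk hι (mk a t)⟩

theorem completeSpace : CompleteSpace (LinesOver ι) := by
  refine ⟨fun {F} hF => ?_⟩
  obtain ⟨S, hS, hSdist⟩ := (Metric.cauchy_iff.1 hF).2 1 one_pos
  obtain ⟨p, hp⟩ := hF.1.nonempty_of_mem hS
  have hline : range (mk p.idx) ∈ F :=
    mem_of_superset hS fun q hq => ball_one_subset_range_mk hι p (hSdist q hq p hp)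
  obtain ⟨x, -, hx⟩ :=
    (isometry_mk p.idx).isUniformInducing.isComplete_range F hF (le_principal_iff.2 hline)
  exact ⟨x, hx⟩

theorem isClosed_graph (h : ι → ℝ) : IsClosed (graph h) := by
  refine isClosed_of_pairwise_le_dist one_pos ?_
  rintro _ ⟨a, rfl⟩ _ ⟨b, rfl⟩ hne
  exact one_le_dist_of_idx_ne hι fun hab : a = b => hne (hab ▸ rfl)

theorem min_le_infDist_mk_graph (h : ι → ℝ) (a : ι) (t : ℝ) :
    min |t - h a| 1 ≤ infDist (mk a t) (graph h) := by
  refine (le_infDist ⟨_, mk_mem_graph h a⟩).2 ?_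
  rintro _ ⟨b, rfl⟩
  rcases eq_or_ne a b with rfl | hab
  · simp
  · exact (min_le_right _ _).trans (one_le_dist_of_idx_ne hι hab)

theorem tendsto_of_mk_mem {Z : Type*} {F : Filter Z} {g : Z → ι → ℝ} {B : Set (LinesOver ι)}
    {a : ι} {t : ℝ}
    (hB : Tendsto (fun z => infDist (mk a t) (graph (g z))) F (𝓝 (infDist (mk a t) B)))
    (hmem : mk a t ∈ B) : Tendsto (fun z => g z a) F (𝓝 t) := by
  rw [infDist_zero_of_mem hmem] at hB
  have hmin : Tendsto (fun z => min |t - g z a| 1) F (𝓝 0) :=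
    squeeze_zero (fun _ => by positivity) (fun z => min_le_infDist_mk_graph hι _ _ _) hB
  refine tendsto_iff_dist_tendsto_zero.2 (hmin.congr' ?_)
  filter_upwards [hmin.eventually (gt_mem_nhds one_pos)] with z hz
  rw [Real.dist_eq, abs_sub_comm (g z a),
    min_eq_left (min_lt_iff.1 hz |>.resolve_right (lt_irrefl 1)).le]

end UniformlyDiscrete

end LinesOver

section UnitInterval

variable {Y : Type*} [TopologicalSpace Y]

theorem exists_continuousMap_eq_zero_eventually_eq_one [CompletelyRegularSpace Y]
    {U : Ultrafilter Y} {y : Y} (h : ¬ (U : Filter Y) ≤ 𝓝 y) :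
    ∃ v : C(Y, I), v y = 0 ∧ ∀ᶠ z in U, v z = 1 := by
  obtain ⟨V, hyV, hV, hVU⟩ : ∃ V, y ∈ V ∧ IsOpen V ∧ V ∉ U := by
    simpa [(nhds_basis_opens y).ge_iff] using h
  obtain ⟨v, hv, hvy, hvV⟩ := CompletelyRegularSpace.completely_regular_isOpen y V hV hyV
  exact ⟨⟨v, hv⟩, hvy, mem_of_superset (U.compl_mem_iff_notMem.2 hVU) hvV⟩

theorem isEmbedding_of_factors_unitInterval [T35Space Y] {Z : Type*} [TopologicalSpace Z]
    {f : Y → Z} (hf : Continuous f)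
    (hfactor : ∀ w : C(Y, I), ∃ φ : Z → ℝ, Continuous φ ∧ ∀ y, φ (f y) = w y) :
    IsEmbedding f := by
  refine ⟨isInducing_iff_nhds.2 fun y => le_antisymm (hf.tendsto y).le_comap ?_, ?_⟩
  · refine (nhds_basis_opens y).ge_iff.2 fun V ⟨hyV, hV⟩ => ?_
    obtain ⟨w, hw, hwy, hwV⟩ := CompletelyRegularSpace.completely_regular_isOpen y V hV hyV
    obtain ⟨φ, hφ, hφf⟩ := hfactor ⟨w, hw⟩
    refine ⟨φ ⁻¹' Iio 1, hφ.continuousAt.preimage_mem_nhds (Iio_mem_nhds ?_), fun z hz => ?_⟩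
    · simp [hφf, hwy]
    · by_contra hzV
      simp [hφf, hwV hzV] at hz
  · intro y y' h
    by_contra hne
    obtain ⟨w, hw, hwne⟩ := separatesPoints_continuous_of_t35Space_Icc hne
    obtain ⟨φ, -, hφf⟩ := hfactor ⟨w, hw⟩
    exact hwne (Subtype.ext (by simpa [hφf] using congrArg φ h))

theorem ContinuousMap.exists_ne_apply_lt (w : C(Y, I)) (y : Y) {ε : ℝ} (hε : 0 < ε) :
    ∃ c ≠ w, (c y : ℝ) < ε := by
  let δ : I := ⟨min (ε / 2) 1, by positivity, min_le_right _ _⟩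
  have hδ : (δ : ℝ) < ε := (min_le_left _ _).trans_lt (half_lt_self hε)
  by_cases h0 : ContinuousMap.const Y 0 = w
  · refine ⟨.const Y δ, fun h => ?_, hδ⟩
    have := congrArg (fun f : C(Y, I) => (f y : ℝ)) (h.trans h0.symm)
    simp only [ContinuousMap.const_apply, δ, Set.Icc.coe_zero] at this
    exact (lt_min (half_pos hε) one_pos).ne' this
  · exact ⟨.const Y 0, h0, by simpa using hε⟩

end UnitInterval

namespace TychonoffWijsman

variable (Y : Type*) [TopologicalSpace Y]

def ZeroInfFamily : Type _ :=
  {N : Set C(Y, I) // ∀ y, ∀ ε > 0, ∃ w ∈ N, (w y : ℝ) < ε}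

inductive Index
  | ofFun (w : C(Y, I))
  | ofFamily (N : ZeroInfFamily Y)

variable {Y}

namespace Index

def Adj : Index Y → Index Y → Prop
  | ofFun w, ofFamily N | ofFamily N, ofFun w => w ∈ N.1
  | _, _ => False

theorem Adj.symm {a b : Index Y} (h : a.Adj b) : b.Adj a := by
  cases a <;> cases b <;> exact h

theorem Adj.ne {a b : Index Y} (h : a.Adj b) : a ≠ b := by
  rintro rfl
  cases a <;> exact h

open scoped Classical in
noncomputable instance : MetricSpace (Index Y) where
  dist a b := if a = b then 0 else if a.Adj b then 1 else 2
  dist_self a := if_pos rfl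
  dist_comm a b := by
    have : a.Adj b ↔ b.Adj a := ⟨Adj.symm, Adj.symm⟩
    simp only [eq_comm, this]
  dist_triangle a b c := by
    split_ifs <;> subst_vars <;> first | contradiction | norm_num
  eq_of_dist_eq_zero {a b} h := by
    by_contra hab
    simp only [hab, if_false] at h
    split_ifs at h <;> norm_num at h

theorem dist_of_adj {a b : Index Y} (h : a.Adj b) : dist a b = 1 :=
  (if_neg h.ne).trans (if_pos h)

theorem dist_of_not_adj {a b : Index Y} (hne : a ≠ b) (h : ¬ a.Adj b) : dist a b = 2 :=
  (if_neg hne).trans (if_neg h)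

theorem pairwise_one_le_dist : Pairwise fun a b : Index Y => 1 ≤ dist a b := by
  intro a b hab
  by_cases h : a.Adj b
  · rw [dist_of_adj h]
  · rw [dist_of_not_adj hab h]; norm_num

def height : Index Y → Y → ℝ
  | ofFun w, y => w y
  | ofFamily _, _ => 2

/-- The distance from `LinesOver.mk a 0` to the points of `toHyperspace Y y` off the line `a`;
it does not depend on `y`. -/
def gap : Index Y → ℝ
  | ofFun _ => 2
  | ofFamily _ => 1

theorem continuous_height (a : Index Y) : Continuous a.height := by
  cases a with
  | ofFun w => exact continuous_subtype_val.comp w.continuous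
  | ofFamily N => exact continuous_const

theorem height_nonneg (a : Index Y) (y : Y) : 0 ≤ a.height y := by
  cases a with
  | ofFun w => exact (w y).2.1
  | ofFamily N => norm_num [height]

theorem isGLB_gap (y : Y) (a : Index Y) :
    IsGLB ((fun b => dist a b + |b.height y|) '' {a}ᶜ) a.gap := by
  refine ⟨?_, fun k hk => le_of_forall_pos_lt_add fun ε hε => ?_⟩
  · rintro _ ⟨b, hb, rfl⟩
    have h1 := pairwise_one_le_dist (Ne.symm hb)
    have h0 := b.height_nonneg y
    show a.gap ≤ dist a b + |b.height y|
    rw [abs_of_nonneg h0]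
    cases a with
    | ofFun w =>
      cases b with
      | ofFun c => rw [dist_of_not_adj (Ne.symm hb) not_false]; simpa [gap] using h0
      | ofFamily N => simp only [gap, height]; linarith
    | ofFamily N => simp only [gap]; linarith
  · obtain ⟨b, hb, hlt⟩ : ∃ b ≠ a, dist a b + |b.height y| < a.gap + ε := by
      cases a with
      | ofFun w =>
        obtain ⟨c, hc, hcy⟩ := w.exists_ne_apply_lt y hε
        refine ⟨ofFun c, fun h => hc (ofFun.inj h), ?_⟩
        rw [dist_of_not_adj (fun h => hc (ofFun.inj h).symm) not_false]
        simpa [gap, height, abs_of_nonneg (c y).2.1] using hcy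
      | ofFamily N =>
        obtain ⟨w, hw, hwy⟩ := N.2 y ε hε
        refine ⟨ofFun w, nofun, ?_⟩
        rw [dist_of_adj (show (ofFamily N).Adj (ofFun w) from hw)]
        simpa [gap, height, abs_of_nonneg (w y).2.1] using hwy
    exact (hk ⟨b, hb, rfl⟩).trans_lt hlt

end Index

open Index

variable (Y) in
noncomputable def toHyperspace (y : Y) : WijsmanHyperspace (LinesOver (Index Y)) :=
  ⟨LinesOver.graph fun a => a.height y, ⟨_, LinesOver.mk_mem_graph _ (ofFun (.const Y 0))⟩,
    LinesOver.isClosed_graph pairwise_one_le_dist _⟩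

theorem infDist_mk_toHyperspace (y : Y) (a : Index Y) (t : ℝ) :
    infDist (LinesOver.mk a t) (toHyperspace Y y).1 = min |t - a.height y| (|t| + a.gap) :=
  LinesOver.infDist_mk_graph (isGLB_gap y a) t

theorem infDist_origin_ofFun (w : C(Y, I)) (y : Y) :
    infDist (LinesOver.mk (ofFun w) 0) (toHyperspace Y y).1 = w y := by
  rw [infDist_mk_toHyperspace]
  simp [height, gap, abs_of_nonneg (w y).2.1]
  linarith [(w y).2.2]

theorem infDist_origin_ofFamily (N : ZeroInfFamily Y) (y : Y) :
    infDist (LinesOver.mk (ofFamily N) 0) (toHyperspace Y y).1 = 1 := by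
  rw [infDist_mk_toHyperspace]
  norm_num [height, gap]

theorem continuous_toHyperspace : Continuous (toHyperspace Y) :=
  WijsmanHyperspace.continuous_iff.2 fun ⟨a, t⟩ => by
    simp_rw [infDist_mk_toHyperspace]
    exact ((continuous_const.sub a.continuous_height).abs).min continuous_const

theorem two_le_dist_origin_ofFamily {U : Filter Y} [U.NeBot] {N : ZeroInfFamily Y}
    (hN : ∀ w ∈ N.1, ∀ᶠ z in U, w z = 1) {b : Index Y} {t : ℝ}
    (ht : Tendsto b.height U (𝓝 t)) :
    2 ≤ dist (LinesOver.mk (ofFamily N) 0) (LinesOver.mk b t) := by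
  by_cases hb : ofFamily N = b
  · subst hb
    have : t = 2 := tendsto_nhds_unique ht tendsto_const_nhds
    simp [this]
  rw [LinesOver.dist_mk_mk_of_ne hb]
  by_cases hadj : (ofFamily N).Adj b
  · cases b with
    | ofFamily _ => exact hadj.elim
    | ofFun w =>
      have : t = 1 := tendsto_nhds_unique ht <|
        tendsto_const_nhds.congr' <| (hN w hadj).mono fun z hz => by simp [height, hz]
      norm_num [dist_of_adj hadj, this]
  · rw [dist_of_not_adj hb hadj, abs_zero]
    linarith [abs_nonneg t]

theorem not_tendsto_toHyperspace [CompletelyRegularSpace Y] {U : Ultrafilter Y}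
    (hU : ∀ y, ¬ (U : Filter Y) ≤ 𝓝 y) (B : WijsmanHyperspace (LinesOver (Index Y))) :
    ¬ Tendsto (toHyperspace Y) ↑U (𝓝 B) := by
  intro hB
  choose v hv0 hv1 using fun y => exists_continuousMap_eq_zero_eventually_eq_one (hU y)
  let N : ZeroInfFamily Y :=
    ⟨range v, fun y ε hε => ⟨v y, mem_range_self y, by simpa [hv0 y] using hε⟩⟩
  have hlim (x) : Tendsto (fun z => infDist x (toHyperspace Y z).1) ↑U (𝓝 (infDist x B.1)) :=
    ((WijsmanHyperspace.continuous_infDist x).tendsto B).comp hB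
  have hle : infDist (LinesOver.mk (ofFamily N) 0) B.1 ≤ 1 :=
    le_of_tendsto' (hlim _) fun z => (infDist_origin_ofFamily N z).le
  have hge : 2 ≤ infDist (LinesOver.mk (ofFamily N) 0) B.1 := by
    refine (le_infDist B.2.1).2 fun ⟨b, t⟩ hp => two_le_dist_origin_ofFamily (U := U) ?_ ?_
    · rintro _ ⟨y, rfl⟩
      exact hv1 y
    · exact LinesOver.tendsto_of_mk_mem pairwise_one_le_dist (hlim _) hp
  linarith

theorem isClosed_range_toHyperspace [CompletelyRegularSpace Y] :
    IsClosed (range (toHyperspace Y)) := by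
  refine isClosed_iff_clusterPt.2 fun B hB => ?_
  obtain ⟨U, -, hU⟩ := mapClusterPt_iff_ultrafilter.1
    (by rwa [MapClusterPt, map_top] : MapClusterPt B ⊤ (toHyperspace Y))
  by_cases hconv : ∃ y, (U : Filter Y) ≤ 𝓝 y
  · obtain ⟨y, hy⟩ := hconv
    exact ⟨y, tendsto_nhds_unique ((continuous_toHyperspace.tendsto y).mono_left hy) hU⟩
  · exact absurd hU (not_tendsto_toHyperspace (not_exists.1 hconv) B)

end TychonoffWijsman

/-- Cao et al.: every Tychonoff (completely regular Hausdorff) space embeds as a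
closed subspace in the Wijsman hyperspace of some complete metric space which is
locally `ℝ` (every point has an open neighbourhood homeomorphic to `ℝ`). -/
theorem stmt14 (Y : Type u) [TopologicalSpace Y] [CompletelyRegularSpace Y]
    [T2Space Y] :
    ∃ (X : Type u) (m : MetricSpace X),
      letI := m
      CompleteSpace X ∧
      (∀ x : X, ∃ u : Set X, IsOpen u ∧ x ∈ u ∧ Nonempty (u ≃ₜ ℝ)) ∧
      ∃ f : Y → WijsmanHyperspace X, Topology.IsClosedEmbedding f := by
  have : T35Space Y := {}
  have hsep := TychonoffWijsman.Index.pairwise_one_le_dist (Y := Y)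
  refine ⟨LinesOver (TychonoffWijsman.Index Y), inferInstance, LinesOver.completeSpace hsep,
    fun x => ?_, TychonoffWijsman.toHyperspace Y, ?_,
    TychonoffWijsman.isClosed_range_toHyperspace⟩
  · exact ⟨range (LinesOver.mk x.idx), LinesOver.isOpen_range_mk hsep _, ⟨x.ht, rfl⟩,
      ⟨(LinesOver.isometry_mk x.idx).isometryEquivOnRange.toHomeomorph.symm⟩⟩
  · exact isEmbedding_of_factors_unitInterval TychonoffWijsman.continuous_toHyperspace fun w =>
      ⟨_, WijsmanHyperspace.continuous_infDist _, TychonoffWijsman.infDist_origin_ofFun w⟩
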